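/- Let n be a positive integer with gcd(n, 6) = 1 and let S = (x_1)(x_2)(x_3)(x_4) be a minimal zero-sum sequence over Z/n with ind(S) = 2. If gcd(n, x_i) = 1 for all i ∈ {1, 2, 3, 4}, then for every permutation σ of {1, 2, 3, 4} one has t(x̄_{σ(1)} x_{σ(2)}, n) = t(x̄_{σ(3)} x_{σ(4)}, n), where x̄ denotes the inverse of x in the multiplicative group (Z/n)^*. -/

import Mathlib

/-!
Every unit `u` of `ZMod n` generates it, so `ind(S) = 2` gives `∑ᵢ (u xᵢ).val ≥ 2n`; applied to
`-u`, for which the values become `n - (u xᵢ).val`, it gives equality. Hence the sawtooth values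
`f(xᵢ u) = (xᵢ u).val / n - 1/2` sum to `0` over `i`, for every unit `u`. Now
`t(a⁻¹ b, n) = ∑ᵤ (f(a u) + 1/2) f(b u)`, translation by a unit preserves `∑ f` and `∑ f²`, and
`A + B + C + D = 0` implies `AB - CD = (C² + D² - A² - B²) / 2`.
-/

open Finset

/-- The representative of `z : ZMod n` in `{1, ..., n}`. -/
def rep (n : ℕ) (z : ZMod n) : ℕ := if z = 0 then n else z.val

/-- `g` is a generator of the additive group `ZMod n`. -/
def IsAddGenerator (n : ℕ) (g : ZMod n) : Prop := AddSubgroup.zmultiples g = ⊤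

/-- `x` is a minimal zero-sum sequence of length 4 over `ZMod n`:
it is a zero-sum sequence, but no proper nontrivial subsequence of it has sum zero. -/
def IsMinZeroSum4 (n : ℕ) (x : Fin 4 → ZMod n) : Prop :=
  (∑ i, x i) = 0 ∧
    ∀ T : Finset (Fin 4), T ≠ ∅ → T ≠ Finset.univ → (∑ i ∈ T, x i) ≠ 0

/-- The `g`-norm `‖S‖_g = (y₁ + ⋯ + y₄)/n` where `S = (y₁ g)⋯(y₄ g)`, `1 ≤ yᵢ ≤ n`. -/
noncomputable def gNorm (n : ℕ) (g : ZMod n) (x : Fin 4 → ZMod n) : ℝ :=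
  (∑ i, (rep n (g⁻¹ * x i) : ℝ)) / n

/-- The index of the sequence `x`: the minimum of the `g`-norms over generators `g`. -/
noncomputable def seqIndex (n : ℕ) (x : Fin 4 → ZMod n) : ℝ :=
  sInf {r : ℝ | ∃ g : ZMod n, IsAddGenerator n g ∧ r = gNorm n g x}

/-- The classical Dedekind sum `s(h, k) = ∑_{r=1}^{k} (r/k)(hr/k − ⌊hr/k⌋ − 1/2)`. -/
def dedekindS (h : ℤ) (k : ℕ) : ℚ :=
  ∑ r ∈ Finset.Icc 1 k,
    (r : ℚ) / k * ((h : ℚ) * r / k - ⌊(h : ℚ) * r / k⌋ - 1 / 2)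

/-- The Dedekind-type sum `t(h, k) = ∑_{1 ≤ r ≤ k, gcd(r,k)=1} (r/k)(hr/k − ⌊hr/k⌋ − 1/2)`. -/
def dedekindT (h : ℤ) (k : ℕ) : ℚ :=
  ∑ r ∈ (Finset.Icc 1 k).filter (fun r => Nat.gcd r k = 1),
    (r : ℚ) / k * ((h : ℚ) * r / k - ⌊(h : ℚ) * r / k⌋ - 1 / 2)


theorem natCast_rep {n : ℕ} [NeZero n] (z : ZMod n) : ((rep n z : ℕ) : ZMod n) = z := by
  unfold rep
  split_ifs with hz
  · simp [hz]
  · exact ZMod.natCast_zmod_val z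

theorem isUnit_of_gcd_rep {n : ℕ} [NeZero n] {z : ZMod n} (h : Nat.gcd n (rep n z) = 1) :
    IsUnit z := by
  rw [← natCast_rep z]
  exact (ZMod.isUnit_iff_coprime _ _).2 (Nat.coprime_comm.1 h)

theorem rep_coe_unit {n : ℕ} [Nontrivial (ZMod n)] (u : (ZMod n)ˣ) :
    rep n u = (u : ZMod n).val :=
  if_neg u.ne_zero

theorem isAddGenerator_coe_unit {n : ℕ} [NeZero n] (w : (ZMod n)ˣ) : IsAddGenerator n w := by
  refine AddSubgroup.eq_top_iff' _ |>.2 fun z => ⟨((z * ↑w⁻¹ : ZMod n).val : ℤ), ?_⟩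
  simp [mul_assoc]

theorem seqIndex_le_gNorm {n : ℕ} [NeZero n] {g : ZMod n} (hg : IsAddGenerator n g)
    (x : Fin 4 → ZMod n) : seqIndex n x ≤ gNorm n g x := by
  refine csInf_le ((Set.finite_range fun g => gNorm n g x).subset ?_).bddBelow ⟨g, hg, rfl⟩
  rintro _ ⟨g, -, rfl⟩
  exact ⟨g, rfl⟩

theorem gNorm_coe_inv_unit {n : ℕ} [Fact (1 < n)] (v : (ZMod n)ˣ) (y : Fin 4 → (ZMod n)ˣ) :
    gNorm n ↑v⁻¹ (fun i => y i) = ((∑ i, ((v * y i : (ZMod n)ˣ) : ZMod n).val : ℕ) : ℝ) / n := by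
  simp only [gNorm, ZMod.inv_coe_unit, inv_inv, ← Units.val_mul, rep_coe_unit, Nat.cast_sum]

theorem val_neg_add_val {n : ℕ} [Fact (1 < n)] (u : (ZMod n)ˣ) :
    ((-u : (ZMod n)ˣ) : ZMod n).val + (u : ZMod n).val = n := by
  have : NeZero (u : ZMod n) := ⟨u.ne_zero⟩
  rw [Units.val_neg, ZMod.val_neg_of_ne_zero]
  exact Nat.sub_add_cancel (ZMod.val_lt _).le

theorem sum_val_neg_mul_add_sum_val_mul {ι : Type*} [Fintype ι] {n : ℕ} [Fact (1 < n)]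
    (y : ι → (ZMod n)ˣ) (u : (ZMod n)ˣ) :
    ∑ i, ((-u * y i : (ZMod n)ˣ) : ZMod n).val + ∑ i, ((u * y i : (ZMod n)ˣ) : ZMod n).val
      = Fintype.card ι * n := by
  simp_rw [← Finset.sum_add_distrib, neg_mul, val_neg_add_val]
  simp

theorem sum_val_mul_eq_of_seqIndex_eq_two {n : ℕ} [Fact (1 < n)] (y : Fin 4 → (ZMod n)ˣ)
    (hind : seqIndex n (fun i => y i) = 2) (u : (ZMod n)ˣ) :
    ∑ i, ((u * y i : (ZMod n)ˣ) : ZMod n).val = 2 * n := by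
  have lower (v : (ZMod n)ˣ) : 2 * n ≤ ∑ i, ((v * y i : (ZMod n)ˣ) : ZMod n).val := by
    have h := hind ▸ seqIndex_le_gNorm (isAddGenerator_coe_unit v⁻¹) _
    rw [gNorm_coe_inv_unit, le_div_iff₀ (Nat.cast_pos.2 (NeZero.pos n))] at h
    exact_mod_cast h
  have h := sum_val_neg_mul_add_sum_val_mul y u
  rw [Fintype.card_fin] at h
  linarith [lower u, lower (-u)]

/-- For a unit `u`, `u.val / n - 1/2` is Dedekind's sawtooth `((u.val / n))`, as `n ∤ u.val`. -/
def sawtooth {n : ℕ} (u : (ZMod n)ˣ) : ℚ := ((u : ZMod n).val : ℚ) / n - 1 / 2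

theorem fract_val_mul_val_div {n : ℕ} [NeZero n] (a b : ZMod n) :
    (a.val : ℚ) * b.val / n - ⌊(a.val : ℚ) * b.val / n⌋ = ((a * b).val : ℚ) / n := by
  rw [← Int.fract, ← Nat.cast_mul, Int.fract_div_natCast_eq_div_natCast_mod, ← ZMod.val_mul]

theorem dedekindT_val_eq_sum_units {n : ℕ} [Fact (1 < n)] (w : (ZMod n)ˣ) :
    dedekindT ((w : ZMod n).val : ℤ) n
      = ∑ u : (ZMod n)ˣ, (sawtooth u + 1 / 2) * sawtooth (w * u) := by
  symm
  refine Finset.sum_bij (fun u _ => (u : ZMod n).val) ?_ ?_ ?_ ?_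
  · intro u _
    simp only [Finset.mem_filter, Finset.mem_Icc]
    refine ⟨⟨Nat.pos_of_ne_zero ?_, (ZMod.val_lt _).le⟩, ZMod.val_coe_unit_coprime u⟩
    exact (ZMod.val_ne_zero _).2 u.ne_zero
  · intro u _ v _ h
    exact Units.ext (ZMod.val_injective n h)
  · intro r hr
    simp only [Finset.mem_filter, Finset.mem_Icc] at hr
    obtain ⟨⟨-, hrn⟩, hcop⟩ := hr
    have hlt : r < n := hrn.lt_of_ne fun h => by
      subst h
      exact (Fact.out : 1 < r).ne' (Nat.gcd_self r ▸ hcop)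
    exact ⟨ZMod.unitOfCoprime r hcop, Finset.mem_univ _, by simp [ZMod.val_cast_of_lt hlt]⟩
  · intro u _
    simp only [sawtooth, Int.cast_natCast, fract_val_mul_val_div, Units.val_mul]
    ring

theorem dedekindT_inv_mul_eq_sum_units {n : ℕ} [Fact (1 < n)] (a b : (ZMod n)ˣ) :
    dedekindT (((a : ZMod n)⁻¹ * b).val : ℤ) n
      = ∑ u : (ZMod n)ˣ, (sawtooth (a * u) + 1 / 2) * sawtooth (b * u) := by
  rw [ZMod.inv_coe_unit, ← Units.val_mul, dedekindT_val_eq_sum_units,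
    ← Equiv.sum_comp (Equiv.mulLeft a)]
  simp only [Equiv.coe_mulLeft, mul_assoc, mul_left_comm b a, inv_mul_cancel_left]

theorem sum_sawtooth_mul_eq_zero {n : ℕ} [Fact (1 < n)] (y : Fin 4 → (ZMod n)ˣ)
    (hind : seqIndex n (fun i => y i) = 2) (u : (ZMod n)ˣ) :
    ∑ i, sawtooth (y i * u) = 0 := by
  have hsum := sum_val_mul_eq_of_seqIndex_eq_two y hind u
  simp only [sawtooth, Finset.sum_sub_distrib, ← Finset.sum_div, mul_comm _ u]
  rw [← Nat.cast_sum, hsum]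
  have : (n : ℚ) ≠ 0 := Nat.cast_ne_zero.2 (NeZero.ne n)
  push_cast
  field_simp
  ring

theorem sum_add_half_mul_eq_of_sum_eq_zero {G K : Type*} [Group G] [Fintype G] [Field K]
    [NeZero (2 : K)]
    (f : G → K) (a b c d : G) (h : ∀ u, f (a * u) + f (b * u) + f (c * u) + f (d * u) = 0) :
    ∑ u, (f (a * u) + 1 / 2) * f (b * u) = ∑ u, (f (c * u) + 1 / 2) * f (d * u) := by
  have translate (g : G) (F : G → K) : ∑ u, F (g * u) = ∑ u, F u :=
    Equiv.sum_comp (Equiv.mulLeft g) F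
  have key (u : G) : 2 * (f (a * u) * f (b * u) - f (c * u) * f (d * u))
      = f (c * u) ^ 2 + f (d * u) ^ 2 - f (a * u) ^ 2 - f (b * u) ^ 2 := by
    linear_combination (f (a * u) + f (b * u) - f (c * u) - f (d * u)) * h u
  have hprod : ∑ u, f (a * u) * f (b * u) = ∑ u, f (c * u) * f (d * u) := by
    refine sub_eq_zero.1 (mul_left_cancel₀ (two_ne_zero (α := K)) ?_)
    rw [← Finset.sum_sub_distrib, Finset.mul_sum]
    simp only [key, Finset.sum_sub_distrib, Finset.sum_add_distrib, translate _ (f · ^ 2)]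
    ring
  simp only [add_mul, Finset.sum_add_distrib, ← Finset.mul_sum, hprod, translate _ f]

theorem dedekindT_eq_of_index_two_general (n : ℕ) (hn : 0 < n)
    (x : Fin 4 → ZMod n) (hind : seqIndex n x = 2)
    (hcop : ∀ i, Nat.gcd n (rep n (x i)) = 1) :
    ∀ σ : Equiv.Perm (Fin 4),
      dedekindT (((x (σ 0))⁻¹ * x (σ 1)).val : ℤ) n =
        dedekindT (((x (σ 2))⁻¹ * x (σ 3)).val : ℤ) n := by
  intro σ
  obtain rfl | hn1 := eq_or_ne n 1
  · rw [Subsingleton.elim ((x (σ 0))⁻¹ * x (σ 1)) ((x (σ 2))⁻¹ * x (σ 3))]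
  have : Fact (1 < n) := ⟨by omega⟩
  obtain ⟨y, rfl⟩ : ∃ y : Fin 4 → (ZMod n)ˣ, (fun i => (y i : ZMod n)) = x :=
    ⟨fun i => (isUnit_of_gcd_rep (hcop i)).unit, funext fun i => IsUnit.unit_spec _⟩
  have hsaw (u : (ZMod n)ˣ) : ∑ i, sawtooth (y (σ i) * u) = 0 :=
    (Equiv.sum_comp σ (fun i => sawtooth (y i * u))).trans (sum_sawtooth_mul_eq_zero y hind u)
  simp only [dedekindT_inv_mul_eq_sum_units]
  exact sum_add_half_mul_eq_of_sum_eq_zero sawtooth _ _ _ _ fun u => by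
    simpa only [Fin.sum_univ_four] using hsaw u

/-- If `gcd(n,6) = 1` and `S = (x₁)(x₂)(x₃)(x₄)` is a minimal zero-sum sequence over
`ZMod n` with `ind(S) = 2` and `gcd(n, xᵢ) = 1` for all `i`, then
`t(x̄_{σ(1)} x_{σ(2)}, n) = t(x̄_{σ(3)} x_{σ(4)}, n)` for every permutation `σ` of the
four indices, where `x̄` is the inverse of `x` in `(ZMod n)ˣ`. -/
theorem dedekindT_eq_of_index_two (n : ℕ) (hn : 0 < n) (h6 : Nat.gcd n 6 = 1)
    (x : Fin 4 → ZMod n) (hx : IsMinZeroSum4 n x) (hind : seqIndex n x = 2)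
    (hcop : ∀ i, Nat.gcd n (rep n (x i)) = 1) :
    ∀ σ : Equiv.Perm (Fin 4),
      dedekindT (((x (σ 0))⁻¹ * x (σ 1)).val : ℤ) n =
        dedekindT (((x (σ 2))⁻¹ * x (σ 3)).val : ℤ) n :=
  dedekindT_eq_of_index_two_general n hn x hind hcop
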